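/- arXiv:2111.14307 — 6 statements merged into one kernel-verified Lean document; each statement's English description precedes it below -/
import Mathlib

section
/- Let C1 and C2 be two distinct rigidity circuits on a common finite vertex type with a common edge e ∈ C1 ∩ C2. Then the combinatorial resultant CRes(C1, C2, e) = (C1 ∪ C2) \ {e} has at least 2|V(C1) ∪ V(C2)| − 2 edges; in particular it is a dependent edge set. -/
/-!
A rigidity circuit `C` is tight: `|C| = 2|V(C)| - 2`. Dependence of `C` forces
`|C| ≥ 2|V(C)| - 2`, since the only dependent subset is `C` itself, and removing one edge leaves a
sparse set, which gives the reverse inequality. For two distinct circuits sharing `e`, the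
intersection `C₁ ∩ C₂` is a proper nonempty subset of `C₁`, hence sparse, so
`|C₁ ∩ C₂| ≤ 2|V(C₁) ∩ V(C₂)| - 3`. Inclusion–exclusion on edges and vertices then gives
`|C₁ ∪ C₂| ≥ 2|V(C₁) ∪ V(C₂)| - 1`, and deleting `e` costs one edge. Since the resultant spans at
most `V(C₁) ∪ V(C₂)`, it violates the sparsity count itself.
-/

open Finset

variable {V : Type*} [Fintype V] [DecidableEq V]

/-- An edge set: a finite set of unordered pairs of distinct vertices (no loops). -/
def IsEdgeSet (E : Finset (Sym2 V)) : Prop := ∀ e ∈ E, ¬ e.IsDiag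

/-- The vertex span `V(E)`: vertices incident to at least one edge of `E`. -/
def vertexSpan (E : Finset (Sym2 V)) : Finset V :=
  Finset.univ.filter fun v => ∃ e ∈ E, v ∈ e

/-- `(2,3)`-sparsity: every nonempty subset `E' ⊆ E` has `|E'| ≤ 2|V(E')| - 3`. -/
def Sparse23 (E : Finset (Sym2 V)) : Prop :=
  ∀ E' ⊆ E, E'.Nonempty → (E'.card : ℤ) ≤ 2 * (vertexSpan E').card - 3

/-- An edge set is dependent if it is not `(2,3)`-sparse. -/
def DependentES (E : Finset (Sym2 V)) : Prop := ¬ Sparse23 E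

/-- A rigidity circuit: a dependent edge set all of whose proper subsets are `(2,3)`-sparse. -/
def IsRigidityCircuit (E : Finset (Sym2 V)) : Prop :=
  IsEdgeSet E ∧ DependentES E ∧ ∀ E' ⊂ E, Sparse23 E'

@[simp]
lemma mem_vertexSpan {E : Finset (Sym2 V)} {v : V} : v ∈ vertexSpan E ↔ ∃ f ∈ E, v ∈ f := by
  simp [vertexSpan]

lemma vertexSpan_mono {E F : Finset (Sym2 V)} (h : E ⊆ F) : vertexSpan E ⊆ vertexSpan F := by
  intro v
  simp only [mem_vertexSpan]
  exact fun ⟨f, hf, hvf⟩ => ⟨f, h hf, hvf⟩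

lemma vertexSpan_union (E F : Finset (Sym2 V)) :
    vertexSpan (E ∪ F) = vertexSpan E ∪ vertexSpan F := by
  ext v
  simp only [mem_vertexSpan, mem_union, or_and_right, exists_or]

lemma IsEdgeSet.two_le_card_vertexSpan {E : Finset (Sym2 V)} (hE : IsEdgeSet E)
    (hne : E.Nonempty) : 2 ≤ #(vertexSpan E) := by
  obtain ⟨f, hf⟩ := hne
  induction f with
  | h a b =>
    have hab : a ≠ b := fun h => hE _ hf (Sym2.mk_isDiag_iff.mpr h)
    calc 2 = #{a, b} := (card_pair hab).symm
      _ ≤ #(vertexSpan E) := card_le_card <| by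
        simpa [insert_subset_iff] using
          ⟨⟨_, hf, Sym2.mem_mk_left a b⟩, ⟨_, hf, Sym2.mem_mk_right a b⟩⟩

lemma dependentES_of_card_gt {E : Finset (Sym2 V)} (hne : E.Nonempty)
    (h : 2 * (#(vertexSpan E) : ℤ) - 3 < #E) : DependentES E :=
  fun hE => (hE E Subset.rfl hne).not_gt h

namespace IsRigidityCircuit

variable {C C₁ C₂ : Finset (Sym2 V)}

lemma nonempty (hC : IsRigidityCircuit C) : C.Nonempty := by
  rw [nonempty_iff_ne_empty]
  rintro rfl
  exact hC.2.1 fun E' hE' hne => absurd (subset_empty.mp hE') hne.ne_empty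

lemma card_gt (hC : IsRigidityCircuit C) : 2 * (#(vertexSpan C) : ℤ) - 3 < #C := by
  obtain ⟨-, hdep, hmin⟩ := hC
  simp only [DependentES, Sparse23, not_forall, not_le] at hdep
  obtain ⟨E', hsub, hne, hlt⟩ := hdep
  obtain rfl : E' = C := by
    by_contra h
    exact (hmin E' (ssubset_of_subset_of_ne hsub h) E' Subset.rfl hne).not_gt hlt
  exact hlt

lemma card_le (hC : IsRigidityCircuit C) : (#C : ℤ) ≤ 2 * #(vertexSpan C) - 2 := by
  obtain ⟨f, hf⟩ := hC.nonempty
  have hspan := hC.1.two_le_card_vertexSpan ⟨f, hf⟩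
  have hgt := hC.card_gt
  have herase : (#(C.erase f) : ℤ) = #C - 1 := by
    rw [card_erase_of_mem hf, Nat.cast_sub (card_pos.mpr ⟨f, hf⟩), Nat.cast_one]
  have hne : (C.erase f).Nonempty := by
    rw [← card_pos, ← Nat.cast_pos (α := ℤ), herase]
    omega
  have hsparse := hC.2.2 _ (erase_ssubset hf) _ Subset.rfl hne
  have hspan_le : #(vertexSpan (C.erase f)) ≤ #(vertexSpan C) :=
    card_le_card (vertexSpan_mono (erase_subset f C))
  omega

lemma card_eq (hC : IsRigidityCircuit C) : (#C : ℤ) = 2 * #(vertexSpan C) - 2 :=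
  le_antisymm hC.card_le (by linarith [hC.card_gt])

lemma eq_of_subset (hC₁ : IsRigidityCircuit C₁) (hC₂ : IsRigidityCircuit C₂) (h : C₁ ⊆ C₂) :
    C₁ = C₂ := by
  by_contra hne
  exact hC₁.2.1 (hC₂.2.2 C₁ (ssubset_of_subset_of_ne h hne))

lemma card_union_ge (hC₁ : IsRigidityCircuit C₁) (hC₂ : IsRigidityCircuit C₂) (hne : C₁ ≠ C₂)
    (hinter : (C₁ ∩ C₂).Nonempty) :
    2 * (#(vertexSpan C₁ ∪ vertexSpan C₂) : ℤ) - 1 ≤ #(C₁ ∪ C₂) := by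
  have hssub : C₁ ∩ C₂ ⊂ C₁ :=
    ssubset_of_subset_of_ne inter_subset_left fun h =>
      hne (hC₁.eq_of_subset hC₂ (inter_eq_left.mp h))
  have hsparse := hC₁.2.2 _ hssub _ Subset.rfl hinter
  have hspan_inter : #(vertexSpan (C₁ ∩ C₂)) ≤ #(vertexSpan C₁ ∩ vertexSpan C₂) :=
    card_le_card <| subset_inter (vertexSpan_mono inter_subset_left)
      (vertexSpan_mono inter_subset_right)
  have hedges := card_union_add_card_inter C₁ C₂
  have hverts := card_union_add_card_inter (vertexSpan C₁) (vertexSpan C₂)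
  have h₁ := hC₁.card_eq
  have h₂ := hC₂.card_eq
  omega

end IsRigidityCircuit

/-- The combinatorial resultant of two distinct rigidity circuits on a common edge has at
least `2|V(C1) ∪ V(C2)| - 2` edges; in particular it is dependent. -/
theorem combinatorialResultant_of_circuits_card_ge (C1 C2 : Finset (Sym2 V))
    (hC1 : IsRigidityCircuit C1) (hC2 : IsRigidityCircuit C2) (hne : C1 ≠ C2)
    (e : Sym2 V) (he : e ∈ C1 ∩ C2) :
    2 * ((vertexSpan C1 ∪ vertexSpan C2).card : ℤ) - 2 ≤ (((C1 ∪ C2) \ {e}).card : ℤ) ∧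
      DependentES ((C1 ∪ C2) \ {e}) := by
  have heu : e ∈ C1 ∪ C2 := mem_union_left _ (mem_inter.mp he).1
  have hcard : (#((C1 ∪ C2) \ {e}) : ℤ) = #(C1 ∪ C2) - 1 := by
    rw [sdiff_singleton_eq_erase, card_erase_of_mem heu, Nat.cast_sub (card_pos.mpr ⟨e, heu⟩),
      Nat.cast_one]
  have hunion := hC1.card_union_ge hC2 hne ⟨e, he⟩
  have hbound : 2 * (#(vertexSpan C1 ∪ vertexSpan C2) : ℤ) - 2 ≤ #((C1 ∪ C2) \ {e}) := by
    linarith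
  refine ⟨hbound, dependentES_of_card_gt ?_ ?_⟩
  · have hspan₁ := hC1.1.two_le_card_vertexSpan hC1.nonempty
    have hspan_le : #(vertexSpan C1) ≤ #(vertexSpan C1 ∪ vertexSpan C2) :=
      card_le_card subset_union_left
    rw [← card_pos, ← Nat.cast_pos (α := ℤ)]
    omega
  · have hspan_le : #(vertexSpan ((C1 ∪ C2) \ {e})) ≤ #(vertexSpan C1 ∪ vertexSpan C2) := by
      rw [← vertexSpan_union]
      exact card_le_card (vertexSpan_mono sdiff_subset)
    omega
end

section
/- (Cayley's theorem on distance matrices.) Let p : Fin n → ℝ^d be any n points in d-dimensional Euclidean space, and let B be the (n+1) × (n+1) real matrix defined by: B 0 0 = 0; B 0 (j+1) = 1 and B (i+1) 0 = 1 for all i, j ∈ Fin n; and B (i+1) (j+1) = ‖p i − p j‖², the squared Euclidean distance between p i and p j. Then the rank of B is at most d + 2. -/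
/-!
Expanding `‖x - y‖² = ‖x‖² + ‖y‖² - 2 ⟪x, y⟫` writes every entry of the bordered matrix as a
dot product of a row vector `(‖x‖², 1, x)` or `(1, 0, 0)` with a column vector
`(1, ‖y‖², -2 y)` or `(0, 1, 0)`, each of length `d + 2`. Hence the matrix factors through
`ℝ^(d+2)` and its rank is at most `d + 2`.
-/

open Matrix

namespace EuclideanSpace

variable {ι : Type*} [Fintype ι]

theorem norm_sub_sq_eq_sum (x y : EuclideanSpace ℝ ι) :
    ‖x - y‖ ^ 2 = ‖x‖ ^ 2 + ‖y‖ ^ 2 + ∑ k, x k * (-2 * y k) := by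
  have hinner : inner ℝ x y = ∑ k, x k * y k := by
    simp [PiLp.inner_apply, mul_comm]
  have hsum : ∑ k, x k * (-2 * y k) = -(2 * ∑ k, x k * y k) := by
    rw [Finset.mul_sum, ← Finset.sum_neg_distrib]
    exact Finset.sum_congr rfl fun k _ => by ring
  rw [norm_sub_sq_real, hinner, hsum]
  ring

end EuclideanSpace

section BorderedDistance

variable {ι : Type*} [Fintype ι] {n : ℕ}

noncomputable def borderedDistLeft (p : Fin n → EuclideanSpace ℝ ι) :
    Matrix (Fin (n + 1)) (Fin 2 ⊕ ι) ℝ :=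
  Matrix.of <| Fin.cons (Sum.elim ![1, 0] 0) fun i => Sum.elim ![‖p i‖ ^ 2, 1] fun k => p i k

noncomputable def borderedDistRight (p : Fin n → EuclideanSpace ℝ ι) :
    Matrix (Fin (n + 1)) (Fin 2 ⊕ ι) ℝ :=
  Matrix.of <| Fin.cons (Sum.elim ![0, 1] 0) fun j => Sum.elim ![1, ‖p j‖ ^ 2] fun k => -2 * p j k

theorem eq_borderedDistLeft_mul_transpose (p : Fin n → EuclideanSpace ℝ ι)
    (B : Matrix (Fin (n + 1)) (Fin (n + 1)) ℝ)
    (h00 : B 0 0 = 0)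
    (h0row : ∀ j : Fin n, B 0 j.succ = 1)
    (h0col : ∀ i : Fin n, B i.succ 0 = 1)
    (hdist : ∀ i j : Fin n, B i.succ j.succ = ‖p i - p j‖ ^ 2) :
    B = borderedDistLeft p * (borderedDistRight p)ᵀ := by
  ext i j
  induction i using Fin.cases <;> induction j using Fin.cases <;>
    simp [borderedDistLeft, borderedDistRight, mul_apply, Fintype.sum_sum_type, h00, h0row,
      h0col, hdist, EuclideanSpace.norm_sub_sq_eq_sum]

end BorderedDistance

/-- Cayley's theorem on distance matrices: the bordered matrix of squared distances of `n`
points in `ℝ^d` has rank at most `d + 2`. -/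
theorem cayley_rank_le (n d : ℕ) (p : Fin n → EuclideanSpace ℝ (Fin d))
    (B : Matrix (Fin (n + 1)) (Fin (n + 1)) ℝ)
    (h00 : B 0 0 = 0)
    (h0row : ∀ j : Fin n, B 0 j.succ = 1)
    (h0col : ∀ i : Fin n, B i.succ 0 = 1)
    (hdist : ∀ i j : Fin n, B i.succ j.succ = ‖p i - p j‖ ^ 2) :
    B.rank ≤ d + 2 := by
  rw [eq_borderedDistLeft_mul_transpose p B h00 h0row h0col hdist]
  calc (borderedDistLeft p * (borderedDistRight p)ᵀ).rank
      ≤ (borderedDistLeft p).rank := rank_mul_le_left _ _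
    _ ≤ Fintype.card (Fin 2 ⊕ Fin d) := rank_le_card_width _
    _ = d + 2 := by simp [add_comm]
end

section
/- (Dress–Lovász uniqueness of circuit polynomials.) Let F be a field, σ a finite type, and I a prime ideal of the multivariate polynomial ring F[x_s : s ∈ σ]. Let C ⊆ σ be a circuit of I, i.e.: there exists a nonzero p ∈ I whose set of variables equals C, and no nonzero q ∈ I has its set of variables strictly contained in C. Then any two irreducible polynomials p, q ∈ I whose sets of variables are contained in C are equal up to multiplication by a nonzero constant of F (i.e., p = c • q for some nonzero c ∈ F). -/
/-!
If `p ∤ q`, pick a variable `xᵢ` of `p` and view `p, q` as polynomials in `xᵢ` over the ring of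
polynomials in the other variables of `C`. By Gauss's lemma `p` stays irreducible over the
fraction field and does not divide `q` there, so `p` and `q` are coprime over it; clearing
denominators gives a nonzero element of `(p, q) ⊆ I` whose variables lie in `C \ {i}`,
contradicting minimality of `C`. Hence `p ∣ q`, and two irreducibles dividing each other are
associated, i.e. differ by a unit, which is a nonzero constant.
-/

open scoped nonZeroDivisors Polynomial

namespace Polynomial

attribute [local instance] Polynomial.algebra in
theorem exists_C_mem_of_map_eq_top {R : Type*} [CommRing R] (K : Type*) [Field K] [Algebra R K]
    [IsFractionRing R K] {J : Ideal R[X]} (hJ : J.map (mapRingHom (algebraMap R K)) = ⊤) :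
    ∃ r ∈ R⁰, C r ∈ J := by
  have := isLocalization R⁰ K
  have h := (IsLocalization.map_algebraMap_ne_top_iff_disjoint (R⁰.map C) K[X] J).not.mp
  obtain ⟨_, ⟨r, hr, rfl⟩, hrJ⟩ := Set.not_disjoint_iff.mp (h (not_not.mpr hJ))
  exact ⟨r, hr, hrJ⟩

theorem exists_C_mem_span_pair_of_not_dvd {R : Type*} [CommRing R] [IsDomain R] [IsGCDMonoid R]
    {P Q : R[X]} (hP : Irreducible P) (hdeg : P.natDegree ≠ 0) (hPQ : ¬ P ∣ Q) :
    ∃ r ≠ 0, C r ∈ Ideal.span {P, Q} := by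
  let φ := mapRingHom (algebraMap R (FractionRing R))
  have hprim := hP.isPrimitive hdeg
  have hirr : Irreducible (φ P) := hprim.irreducible_iff_irreducible_map_fraction_map.mp hP
  have hcop : IsCoprime (φ P) (φ Q) :=
    hirr.coprime_iff_not_dvd.mpr (mt hprim.dvd_of_fraction_map_dvd_fraction_map hPQ)
  have htop : (Ideal.span {P, Q}).map φ = ⊤ := by
    rwa [Ideal.map_span, Set.image_pair, Ideal.eq_top_iff_one, Ideal.mem_span_pair]
  obtain ⟨r, hr, hrJ⟩ := exists_C_mem_of_map_eq_top (FractionRing R) htop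
  exact ⟨r, nonZeroDivisors.ne_zero hr, hrJ⟩

end Polynomial

namespace MvPolynomial

theorem vars_nonempty_of_irreducible {F σ : Type*} [Field F] {p : MvPolynomial σ F}
    (hp : Irreducible p) : p.vars.Nonempty := by
  rw [Finset.nonempty_iff_ne_empty, Ne, vars_eq_empty_iff_eq_C]
  intro h
  refine hp.not_isUnit (h ▸ (isUnit_iff_ne_zero.mpr fun h0 => hp.ne_zero ?_).map C)
  rw [h, h0, C_0]

theorem exists_isUnit_smul_eq_of_associated {R σ : Type*} [CommRing R] [IsReduced R]
    {p q : MvPolynomial σ R} (h : Associated q p) : ∃ c : R, IsUnit c ∧ p = c • q := by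
  obtain ⟨u, rfl⟩ := h
  obtain ⟨c, hc, hu⟩ := isUnit_iff_eq_C_of_isReduced.mp u.isUnit
  exact ⟨c, hc, by rw [hu, smul_eq_C_mul, mul_comm]⟩

theorem isLocalHom_rename {R σ τ : Type*} [CommSemiring R] {f : τ → σ}
    (hf : Function.Injective f) : IsLocalHom (rename f : MvPolynomial τ R →ₐ[R] MvPolynomial σ R) :=
  ⟨fun a ha => by simpa only [killCompl_rename_app] using ha.map (killCompl hf)⟩

variable {R σ : Type*} [CommRing R] [IsDomain R] [UniqueFactorizationMonoid R]

theorem exists_mem_span_pair_notMem_vars {p q : MvPolynomial σ R} (hp : Irreducible p) {i : σ}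
    (hi : i ∈ p.vars) (hpq : ¬ p ∣ q) : ∃ d ∈ Ideal.span {p, q}, d ≠ 0 ∧ i ∉ d.vars := by
  classical
  let e : MvPolynomial σ R ≃ₐ[R] (MvPolynomial {j // j ≠ i} R)[X] :=
    (renameEquiv R (Equiv.optionSubtypeNe i).symm).trans (optionEquivLeft R _)
  have he : e.symm.toAlgHom.comp Polynomial.CAlgHom = rename Subtype.val := by ext; simp [e]
  have hC : ∀ r, i ∉ (e.symm (Polynomial.C r)).vars := fun r hr => by
    obtain ⟨j, -, hj⟩ := mem_vars_rename _ _ (AlgHom.congr_fun he r ▸ hr)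
    exact j.2 hj
  have hdeg : (e p).natDegree ≠ 0 := fun h => by
    apply hC ((e p).coeff 0)
    rwa [← Polynomial.eq_C_of_natDegree_eq_zero h, AlgEquiv.symm_apply_apply]
  obtain ⟨r, hr, hrPQ⟩ := Polynomial.exists_C_mem_span_pair_of_not_dvd (Q := e q) (hp.map e) hdeg
    (fun h => hpq (by simpa using map_dvd e.symm h))
  refine ⟨e.symm (Polynomial.C r), ?_, by simpa using hr, hC r⟩
  obtain ⟨a, b, hab⟩ := Ideal.mem_span_pair.mp hrPQ
  exact Ideal.mem_span_pair.mpr ⟨e.symm a, e.symm b, by simp [← hab]⟩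

theorem exists_mem_span_pair_vars_subset_notMem_vars {p q : MvPolynomial σ R} {S : Finset σ}
    (hpS : p.vars ⊆ S) (hqS : q.vars ⊆ S) (hp : Irreducible p) {i : σ} (hi : i ∈ p.vars)
    (hpq : ¬ p ∣ q) : ∃ d ∈ Ideal.span {p, q}, d ≠ 0 ∧ d.vars ⊆ S ∧ i ∉ d.vars := by
  have := isLocalHom_rename (R := R) (Subtype.val_injective : Function.Injective ((↑) : S → σ))
  obtain ⟨p₀, rfl⟩ := exists_rename_eq_of_vars_subset_range p ((↑) : S → σ)
    Subtype.val_injective (by simpa using hpS)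
  obtain ⟨q₀, rfl⟩ := exists_rename_eq_of_vars_subset_range q ((↑) : S → σ)
    Subtype.val_injective (by simpa using hqS)
  obtain ⟨j, hj, rfl⟩ := mem_vars_rename _ _ hi
  obtain ⟨d₀, hd₀, hd₀0, hjd₀⟩ := exists_mem_span_pair_notMem_vars hp.of_map hj
    (mt (map_dvd (rename _)) hpq)
  refine ⟨rename (↑) d₀, ?_, ?_, fun k hk => ?_, fun hjd => ?_⟩
  · rw [← Set.image_pair, ← Ideal.map_span]
    exact Ideal.mem_map_of_mem _ hd₀
  · exact (map_ne_zero_iff _ (rename_injective _ Subtype.val_injective)).mpr hd₀0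
  · obtain ⟨k, -, rfl⟩ := mem_vars_rename _ _ hk
    exact k.2
  · obtain ⟨k, hk, hkj⟩ := mem_vars_rename _ _ hjd
    exact hjd₀ (Subtype.val_injective hkj ▸ hk)

end MvPolynomial

open MvPolynomial

theorem circuitPolynomial_unique_general {F : Type*} [Field F] {σ : Type*}
    (I : Ideal (MvPolynomial σ F)) (C : Finset σ)
    (hCmin : ∀ q ∈ I, q ≠ 0 → ¬ q.vars ⊂ C)
    (p q : MvPolynomial σ F) (hp : p ∈ I) (hq : q ∈ I)
    (hpirr : Irreducible p) (hqirr : Irreducible q)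
    (hpv : p.vars ⊆ C) (hqv : q.vars ⊆ C) :
    ∃ c : F, c ≠ 0 ∧ p = c • q := by
  by_cases hpq : p ∣ q
  · obtain ⟨c, hc, hpc⟩ :=
      exists_isUnit_smul_eq_of_associated (hpirr.associated_of_dvd hqirr hpq).symm
    exact ⟨c, hc.ne_zero, hpc⟩
  obtain ⟨i, hi⟩ := vars_nonempty_of_irreducible hpirr
  obtain ⟨d, hdpq, hd0, hdC, hid⟩ :=
    exists_mem_span_pair_vars_subset_notMem_vars hpv hqv hpirr hi hpq
  have hdI : d ∈ I := Ideal.span_le.mpr (Set.pair_subset hp hq) hdpq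
  exact (hCmin d hdI hd0 ((Finset.ssubset_iff_of_subset hdC).mpr ⟨i, hpv hi, hid⟩)).elim

/-- Dress–Lovász uniqueness of circuit polynomials: if `C` is a circuit of a prime ideal
`I` of `F[x_s : s ∈ σ]`, then any two irreducible polynomials of `I` with variables
contained in `C` agree up to a nonzero constant factor. -/
theorem circuitPolynomial_unique {F : Type*} [Field F] {σ : Type*} [Fintype σ]
    [DecidableEq σ] (I : Ideal (MvPolynomial σ F)) (hI : I.IsPrime) (C : Finset σ)
    (hC : ∃ p ∈ I, p ≠ 0 ∧ p.vars = C)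
    (hCmin : ∀ q ∈ I, q ≠ 0 → ¬ q.vars ⊂ C)
    (p q : MvPolynomial σ F) (hp : p ∈ I) (hq : q ∈ I)
    (hpirr : Irreducible p) (hqirr : Irreducible q)
    (hpv : p.vars ⊆ C) (hqv : q.vars ⊆ C) :
    ∃ c : F, c ≠ 0 ∧ p = c • q :=
  circuitPolynomial_unique_general I C hCmin p q hp hq hpirr hqirr hpv hqv
end

section
/- Let F be a field, σ a finite type, and I a prime ideal of the multivariate polynomial ring F[x_s : s ∈ σ]. Let C ⊆ σ be a circuit of I, i.e.: there exists a nonzero p ∈ I whose set of variables equals C, and no nonzero q ∈ I has its set of variables strictly contained in C. Then the elimination ideal I ∩ F[x_s : s ∈ C] (the preimage of I under the inclusion F[x_s : s ∈ C] → F[x_s : s ∈ σ] given by renaming along the inclusion C ↪ σ) is a principal ideal, generated by an irreducible polynomial whose set of variables is exactly C. -/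
/-!
The elimination ideal `J` is prime, and minimality of `C` forces every nonzero element of `J` to
involve every variable. As `F[x_C]` is a UFD, `J` contains a prime `g`; pick a variable `t` of `g`
and view `F[x_C]` as `A[x_t]` with `A = F[x_{C ∖ t}]`. Then `J ∩ A = 0`, so `J` extends to a proper
ideal of `Frac(A)[x_t]`, a PID in which the extension of `(g)` is a nonzero prime, hence maximal.
The two extensions therefore agree, and contracting back gives `J = (g)`.
-/

open MvPolynomial

theorem IsLocalization.eq_of_le_of_disjoint {R S : Type*} [CommRing R] [CommRing S]
    [Algebra R S] [Ring.DimensionLEOne S] (M : Submonoid R) [IsLocalization M S]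
    {P J : Ideal R} (hP : P.IsPrime) (hP0 : P.map (algebraMap R S) ≠ ⊥) (hPJ : P ≤ J)
    (hJ : Disjoint (M : Set R) J) : P = J := by
  have hPmax : (P.map (algebraMap R S)).IsMaximal :=
    (isPrime_of_isPrime_disjoint M S P hP (hJ.mono_right hPJ)).isMaximal hP0
  have hmap : P.map (algebraMap R S) = J.map (algebraMap R S) :=
    hPmax.eq_of_le ((map_algebraMap_ne_top_iff_disjoint M S J).2 hJ) (Ideal.map_mono hPJ)
  refine le_antisymm hPJ ?_
  calc J ≤ (J.map (algebraMap R S)).comap (algebraMap R S) := Ideal.le_comap_map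
    _ = P := by rw [← hmap]; exact under_map_of_isPrime_disjoint M S hP (hJ.mono_right hPJ)

open Polynomial in
theorem Polynomial.eq_span_singleton_of_prime_mem {A : Type*} [CommRing A] [IsDomain A]
    {J : Ideal A[X]} (hJ : ∀ a, C a ∈ J → a = 0) {g : A[X]} (hg : Prime g) (hgJ : g ∈ J) :
    J = Ideal.span {g} := by
  let K := FractionRing A
  let : Algebra A[X] K[X] := Polynomial.algebra A K
  have : IsLocalization ((nonZeroDivisors A).map C) K[X] :=
    Polynomial.isLocalization (nonZeroDivisors A) K
  refine (IsLocalization.eq_of_le_of_disjoint ((nonZeroDivisors A).map C) (S := K[X])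
    ((Ideal.span_singleton_prime hg.ne_zero).2 hg) ?_ ?_ ?_).symm
  · rw [Ideal.map_span, Set.image_singleton, Ne, Ideal.span_singleton_eq_bot]
    exact (Polynomial.map_ne_zero_iff (IsFractionRing.injective A K)).2 hg.ne_zero
  · exact (Ideal.span_singleton_le_iff_mem J).2 hgJ
  · rw [Set.disjoint_left]
    rintro _ ⟨a, ha, rfl⟩ haJ
    exact nonZeroDivisors.ne_zero ha (hJ a haJ)

theorem MvPolynomial.eq_span_singleton_of_prime_mem {R σ : Type*} [CommRing R] [IsDomain R]
    [DecidableEq σ] {J : Ideal (MvPolynomial σ R)} (t : σ)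
    (hJ : ∀ p ∈ J, p ≠ 0 → t ∈ p.vars) {g : MvPolynomial σ R} (hg : Prime g) (hgJ : g ∈ J) :
    J = Ideal.span {g} := by
  let e : MvPolynomial σ R ≃ₐ[R] Polynomial (MvPolynomial {s // s ≠ t} R) :=
    (renameEquiv R (Equiv.optionSubtypeNe t).symm).trans (optionEquivLeft R _)
  have he : ∀ a, e.symm (Polynomial.C a) = rename Subtype.val a := by
    have : e.symm.toAlgHom.comp Polynomial.CAlgHom = rename Subtype.val := by ext; simp [e]
    exact fun a => AlgHom.congr_fun this a
  have hJe : J.comap e.symm = Ideal.span {e g} := by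
    refine Polynomial.eq_span_singleton_of_prime_mem (fun a ha => ?_) ((MulEquiv.prime_iff e).2 hg)
      (by rwa [Ideal.mem_comap, e.symm_apply_apply])
    rw [Ideal.mem_comap, he] at ha
    by_contra ha0
    obtain ⟨s, -, hs⟩ := mem_vars_rename _ _
      (hJ _ ha ((rename_injective _ Subtype.val_injective).ne ha0))
    exact s.2 hs
  ext f
  rw [← e.symm_apply_apply f, ← Ideal.mem_comap, hJe, Ideal.mem_span_singleton,
    Ideal.mem_span_singleton, e.symm_apply_apply, map_dvd_iff]

theorem MvPolynomial.vars_eq_univ_of_rename_mem {R σ : Type*} [CommSemiring R] [DecidableEq σ]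
    {I : Ideal (MvPolynomial σ R)} {C : Finset σ} (hCmin : ∀ q ∈ I, q ≠ 0 → ¬ q.vars ⊂ C)
    {f : MvPolynomial C R} (hfI : rename Subtype.val f ∈ I) (hf0 : f ≠ 0) :
    f.vars = Finset.univ := by
  have hsub : (rename Subtype.val f).vars ⊆ C := fun s hs => by
    obtain ⟨i, -, rfl⟩ := mem_vars_rename _ _ hs
    exact i.2
  have hvars : (rename Subtype.val f).vars = C := by
    by_contra hne
    exact hCmin _ hfI ((rename_injective _ Subtype.val_injective).ne hf0)
      (hsub.ssubset_of_ne hne)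
  refine Finset.eq_univ_of_forall fun s => ?_
  obtain ⟨i, hi, his⟩ := mem_vars_rename Subtype.val f (hvars.symm ▸ s.2 : s.1 ∈ _)
  rwa [← Subtype.val_injective his]

theorem MvPolynomial.vars_nonempty_of_not_isUnit {K σ : Type*} [Field K] {p : MvPolynomial σ K}
    (hp0 : p ≠ 0) (hp : ¬IsUnit p) : p.vars.Nonempty := by
  classical
  rw [Finset.nonempty_iff_ne_empty, Ne, vars_eq_empty_iff_eq_C]
  intro hC
  rw [hC, Ne, C_eq_zero] at hp0
  exact hp (hC ▸ (isUnit_iff_ne_zero.2 hp0).map C)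

theorem eliminationIdeal_of_circuit_principal_general {F : Type*} [Field F] {σ : Type*}
    [DecidableEq σ] (I : Ideal (MvPolynomial σ F)) (hI : I.IsPrime) (C : Finset σ)
    (hC : ∃ p ∈ I, p ≠ 0 ∧ p.vars = C)
    (hCmin : ∀ q ∈ I, q ≠ 0 → ¬ q.vars ⊂ C) :
    ∃ g : MvPolynomial {s : σ // s ∈ C} F,
      Irreducible g ∧ g.vars.image Subtype.val = C ∧
      Ideal.comap (MvPolynomial.rename (Subtype.val : {s : σ // s ∈ C} → σ)) I =
        Ideal.span {g} := by
  obtain ⟨p, hpI, hp0, hpvars⟩ := hC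
  obtain ⟨p, rfl⟩ := p.exists_rename_eq_of_vars_subset_range (Subtype.val : C → σ)
    Subtype.val_injective (by simp [hpvars])
  have hvars (f) (hf : f ∈ I.comap (rename Subtype.val)) (hf0 : f ≠ 0) : f.vars = Finset.univ :=
    vars_eq_univ_of_rename_mem hCmin hf hf0
  have hbot : I.comap (rename Subtype.val) ≠ ⊥ :=
    (Submodule.ne_bot_iff _).2 ⟨p, hpI, by rintro rfl; simp at hp0⟩
  obtain ⟨g, hgJ, hg⟩ := (hI.comap _).exists_mem_prime_of_ne_bot hbot
  obtain ⟨t, -⟩ := vars_nonempty_of_not_isUnit hg.ne_zero hg.not_isUnit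
  refine ⟨g, hg.irreducible, by simp [hvars g hgJ hg.ne_zero], ?_⟩
  exact eq_span_singleton_of_prime_mem t
    (fun f hf hf0 => hvars f hf hf0 ▸ Finset.mem_univ t) hg hgJ

/-- If `C` is a circuit of a prime ideal `I` of `F[x_s : s ∈ σ]`, then the elimination
ideal `I ∩ F[x_s : s ∈ C]` is principal, generated by an irreducible polynomial whose
set of variables is exactly `C`. -/
theorem eliminationIdeal_of_circuit_principal {F : Type*} [Field F] {σ : Type*} [Fintype σ]
    [DecidableEq σ] (I : Ideal (MvPolynomial σ F)) (hI : I.IsPrime) (C : Finset σ)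
    (hC : ∃ p ∈ I, p ≠ 0 ∧ p.vars = C)
    (hCmin : ∀ q ∈ I, q ≠ 0 → ¬ q.vars ⊂ C) :
    ∃ g : MvPolynomial {s : σ // s ∈ C} F,
      Irreducible g ∧ g.vars.image Subtype.val = C ∧
      Ideal.comap (MvPolynomial.rename (Subtype.val : {s : σ // s ∈ C} → σ)) I =
        Ideal.span {g} :=
  eliminationIdeal_of_circuit_principal_general I hI C hC hCmin
end

section
/- Let F be a field, τ a type, and let f, g be multivariate polynomials in the variables indexed by Option τ over F. Regard f and g as univariate polynomials f₁, g₁ in the distinguished variable x_none with coefficients in the multivariate polynomial ring F[x_t : t ∈ τ], via the canonical algebra isomorphism MvPolynomial (Option τ) F ≃ Polynomial (MvPolynomial τ F). Then the set of variables of the resultant Res(f₁, g₁) ∈ F[x_t : t ∈ τ] is contained in {t ∈ τ : some t ∈ f.vars ∪ g.vars}; that is, the resultant is supported on the union of the variables of f and g with the eliminated variable removed. -/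
/-!
Every entry of the Sylvester matrix is zero or a coefficient of `f` or `g`, so the resultant
lies in any subring containing those coefficients. The coefficients of `optionEquivLeft f`
only involve the variables `t` with `some t ∈ f.vars`, so the coefficients of both polynomials
lie in the subalgebra `supported F {t | some t ∈ f.vars ∪ g.vars}`, and hence so does the
resultant.
-/

open Polynomial

theorem Matrix.det_mem {n A S : Type*} [Fintype n] [DecidableEq n] [CommRing A] [SetLike S A]
    [SubringClass S A] {s : S} {M : Matrix n n A} (hM : ∀ i j, M i j ∈ s) : M.det ∈ s := by
  rw [Matrix.det_apply]
  exact sum_mem fun σ _ => by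
    rw [Units.smul_def]
    exact zsmul_mem (prod_mem fun i _ => hM _ _) _

namespace MvPolynomial

theorem mem_vars_of_mem_vars_coeff_optionEquivLeft {R σ : Type*} [CommSemiring R]
    {f : MvPolynomial (Option σ) R} {i : ℕ} {t : σ}
    (h : t ∈ ((optionEquivLeft R σ f).coeff i).vars) : some t ∈ f.vars := by
  rw [mem_vars_iff_mem_support] at h ⊢
  obtain ⟨m, hm, ht⟩ := h
  refine ⟨m.optionElim i, (mem_support_coeff_optionEquivLeft R).mp hm, ?_⟩
  simpa only [Finsupp.mem_support_iff, Finsupp.optionElim_apply_some] using ht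

theorem coeff_optionEquivLeft_mem_supported {R σ : Type*} [CommSemiring R]
    (f : MvPolynomial (Option σ) R) (i : ℕ) :
    (optionEquivLeft R σ f).coeff i ∈ supported R {t | some t ∈ f.vars} :=
  mem_supported.mpr fun _ ht => mem_vars_of_mem_vars_coeff_optionEquivLeft ht

end MvPolynomial

/-- The Sylvester matrix of two univariate polynomials `f` and `g`: a square matrix of
size `deg f + deg g` whose first `deg g` columns carry the shifted coefficients of `f`
and whose remaining `deg f` columns carry the shifted coefficients of `g`. -/
noncomputable def sylvesterMatrix {R : Type*} [CommRing R] (f g : R[X]) :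
    Matrix (Fin (f.natDegree + g.natDegree)) (Fin (f.natDegree + g.natDegree)) R :=
  Matrix.of fun i j =>
    if (j : ℕ) < g.natDegree then
      if (j : ℕ) ≤ (i : ℕ) ∧ (i : ℕ) ≤ (j : ℕ) + f.natDegree then
        f.coeff ((i : ℕ) - (j : ℕ))
      else 0
    else
      if (j : ℕ) - g.natDegree ≤ (i : ℕ) ∧ (i : ℕ) ≤ ((j : ℕ) - g.natDegree) + g.natDegree then
        g.coeff ((i : ℕ) - ((j : ℕ) - g.natDegree))
      else 0

/-- The resultant of two univariate polynomials: the determinant of their Sylvester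
matrix. -/
noncomputable def resultant {R : Type*} [CommRing R] (f g : R[X]) : R :=
  (sylvesterMatrix f g).det

theorem sylvesterMatrix_mem {R S : Type*} [CommRing R] [SetLike S R] [ZeroMemClass S R]
    {s : S} {f g : R[X]} (hf : ∀ k, f.coeff k ∈ s) (hg : ∀ k, g.coeff k ∈ s) (i j) :
    sylvesterMatrix f g i j ∈ s := by
  simp only [sylvesterMatrix, Matrix.of_apply]
  split_ifs <;> first | exact zero_mem s | exact hf _ | exact hg _

theorem resultant_mem {R S : Type*} [CommRing R] [SetLike S R] [SubringClass S R]
    {s : S} {f g : R[X]} (hf : ∀ k, f.coeff k ∈ s) (hg : ∀ k, g.coeff k ∈ s) :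
    _root_.resultant f g ∈ s :=
  Matrix.det_mem (sylvesterMatrix_mem hf hg)

open MvPolynomial in
/-- Eliminating the distinguished variable `x_none` of two multivariate polynomials
`f, g ∈ F[x_s : s ∈ Option τ]` by taking the resultant with respect to `x_none` (viewing
them as univariate polynomials over `F[x_t : t ∈ τ]` via `optionEquivLeft`) produces a
polynomial supported on the union of the variables of `f` and `g` minus the eliminated
variable. -/
theorem vars_resultant_subset {F : Type*} [Field F] {τ : Type*} [DecidableEq τ]
    (f g : MvPolynomial (Option τ) F) :
    ∀ t : τ,
      t ∈ (_root_.resultant (optionEquivLeft F τ f) (optionEquivLeft F τ g)).vars →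
        Option.some t ∈ f.vars ∪ g.vars := by
  intro t ht
  have hf : {t | some t ∈ f.vars} ⊆ {t | some t ∈ f.vars ∪ g.vars} :=
    fun _ h => Finset.mem_union_left _ h
  have hg : {t | some t ∈ g.vars} ⊆ {t | some t ∈ f.vars ∪ g.vars} :=
    fun _ h => Finset.mem_union_right _ h
  have hres : _root_.resultant (optionEquivLeft F τ f) (optionEquivLeft F τ g) ∈
      supported F {t | some t ∈ f.vars ∪ g.vars} :=
    resultant_mem (fun k => supported_mono hf (coeff_optionEquivLeft_mem_supported f k))
      (fun k => supported_mono hg (coeff_optionEquivLeft_mem_supported g k))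
  exact mem_supported.mp hres ht
end

section
/- Let E1 and E2 be two edge sets on a common finite vertex type with a common edge e ∈ E1 ∩ E2, and suppose |E1| ≥ 2|V(E1)| − 2, |E2| ≥ 2|V(E2)| − 2, and |E1 ∩ E2| ≤ 2|V(E1) ∩ V(E2)| − 3. Then |(E1 ∪ E2) \ {e}| ≥ 2|V(E1) ∪ V(E2)| − 2. -/
open Finset

variable {V : Type*} [Fintype V] [DecidableEq V]

theorem card_union_sdiff_ge_general (E1 E2 : Finset (Sym2 V))
    (e : Sym2 V) (he : e ∈ E1 ∩ E2)
    (h1 : 2 * ((vertexSpan E1).card : ℤ) - 2 ≤ (E1.card : ℤ))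
    (h2 : 2 * ((vertexSpan E2).card : ℤ) - 2 ≤ (E2.card : ℤ))
    (h12 : ((E1 ∩ E2).card : ℤ) ≤ 2 * ((vertexSpan E1 ∩ vertexSpan E2).card : ℤ) - 3) :
    2 * ((vertexSpan E1 ∪ vertexSpan E2).card : ℤ) - 2 ≤ (((E1 ∪ E2) \ {e}).card : ℤ) := by
  have hE := card_union_add_card_inter E1 E2
  have hV := card_union_add_card_inter (vertexSpan E1) (vertexSpan E2)
  have he' : ((E1 ∪ E2) \ {e}).card + 1 = (E1 ∪ E2).card := by
    rw [sdiff_singleton_eq_erase]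
    exact card_erase_add_one (mem_union_left E2 (mem_inter.mp he).1)
  omega

/-- Counting lemma: if `|E1| ≥ 2|V(E1)| - 2`, `|E2| ≥ 2|V(E2)| - 2` and
`|E1 ∩ E2| ≤ 2|V(E1) ∩ V(E2)| - 3`, then `|(E1 ∪ E2) \ {e}| ≥ 2|V(E1) ∪ V(E2)| - 2`. -/
theorem card_union_sdiff_ge (E1 E2 : Finset (Sym2 V))
    (hE1 : IsEdgeSet E1) (hE2 : IsEdgeSet E2)
    (e : Sym2 V) (he : e ∈ E1 ∩ E2)
    (h1 : 2 * ((vertexSpan E1).card : ℤ) - 2 ≤ (E1.card : ℤ))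
    (h2 : 2 * ((vertexSpan E2).card : ℤ) - 2 ≤ (E2.card : ℤ))
    (h12 : ((E1 ∩ E2).card : ℤ) ≤ 2 * ((vertexSpan E1 ∩ vertexSpan E2).card : ℤ) - 3) :
    2 * ((vertexSpan E1 ∪ vertexSpan E2).card : ℤ) - 2 ≤ (((E1 ∪ E2) \ {e}).card : ℤ) :=
  card_union_sdiff_ge_general E1 E2 e he h1 h2 h12
end
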